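/- Let 0 < μ₁ ≤ μ₂ ≤ … ≤ μ_N and ε₁ ≥ ε₂ ≥ … ≥ ε_N > 0. Define rewards recursively by r_N* = μ_N ε_N and r_i* = r_{i+1}* + μᵢ(εᵢ − ε_{i+1}) for i < N. Then the contract satisfies incentive compatibility: for all i ≠ j, rᵢ* − μᵢ εᵢ ≥ r_j* − μᵢ ε_j. -/
import Mathlib


/-- Incentive compatibility of the recursively-defined contract rewards:
with `0 < μ₁ ≤ … ≤ μ_N`, `ε₁ ≥ … ≥ ε_N > 0`, `r_N* = μ_N ε_N` and
`r_i* = r_{i+1}* + μᵢ(εᵢ − ε_{i+1})`, each device maximizes its utility with its own item: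
for all `i ≠ j`, `rᵢ* − μᵢ εᵢ ≥ r_j* − μᵢ ε_j`. -/
theorem stmt15 (N : ℕ) (hN : 0 < N) (μ ε r : Fin N → ℝ)
    (hμpos : ∀ i, 0 < μ i) (hμmono : ∀ i j : Fin N, i ≤ j → μ i ≤ μ j)
    (hεpos : ∀ i, 0 < ε i) (hεanti : ∀ i j : Fin N, i ≤ j → ε j ≤ ε i)
    (hlast : r ⟨N - 1, by omega⟩ = μ ⟨N - 1, by omega⟩ * ε ⟨N - 1, by omega⟩)
    (hrec : ∀ (i : ℕ) (h : i + 1 < N),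
      r ⟨i, by omega⟩ = r ⟨i + 1, h⟩
        + μ ⟨i, by omega⟩ * (ε ⟨i, by omega⟩ - ε ⟨i + 1, h⟩)) :
    ∀ i j : Fin N, i ≠ j → r j - μ i * ε j ≤ r i - μ i * ε i := by
  -- lower bound: r j - r (j+d) ≥ μ j * (ε j - ε (j+d))
  have aux1 : ∀ d j (h : j + d < N),
      μ ⟨j, by omega⟩ * (ε ⟨j, by omega⟩ - ε ⟨j + d, h⟩)
        ≤ r ⟨j, by omega⟩ - r ⟨j + d, h⟩ := by
    intro d
    induction d with
    | zero => intro j h; simp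
    | succ d ih =>
      intro j h
      have h1 : j + 1 < N := by omega
      have hrj := hrec j h1
      have hih := ih (j + 1) (by omega : (j + 1) + d < N)
      have hμ : μ ⟨j, by omega⟩ ≤ μ ⟨j + 1, h1⟩ := by
        apply hμmono; exact Fin.mk_le_mk.mpr (by omega)
      have hε1 : ε ⟨j + 1, h1⟩ ≤ ε ⟨j, by omega⟩ := by
        apply hεanti; exact Fin.mk_le_mk.mpr (by omega)
      have hε2 : ε ⟨j + 1 + d, by omega⟩ ≤ ε ⟨j + 1, h1⟩ := by
        apply hεanti; exact Fin.mk_le_mk.mpr (by omega)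
      have key : μ ⟨j, by omega⟩ * (ε ⟨j + 1, h1⟩ - ε ⟨j + 1 + d, by omega⟩)
          ≤ μ ⟨j + 1, h1⟩ * (ε ⟨j + 1, h1⟩ - ε ⟨j + 1 + d, by omega⟩) := by
        apply mul_le_mul_of_nonneg_right hμ (by linarith)
      have heq : (⟨j + (d + 1), h⟩ : Fin N) = ⟨j + 1 + d, by omega⟩ := by
        apply Fin.ext; simp; omega
      rw [heq, hrj]
      nlinarith
  -- upper bound: r j - r (j+d) ≤ μ (j+d) * (ε j - ε (j+d))
  have aux2 : ∀ d j (h : j + d < N),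
      r ⟨j, by omega⟩ - r ⟨j + d, h⟩
        ≤ μ ⟨j + d, h⟩ * (ε ⟨j, by omega⟩ - ε ⟨j + d, h⟩) := by
    intro d
    induction d with
    | zero => intro j h; simp
    | succ d ih =>
      intro j h
      have h1 : j + 1 < N := by omega
      have hrj := hrec j h1
      have hih := ih (j + 1) (by omega : (j + 1) + d < N)
      have hμ : μ ⟨j, by omega⟩ ≤ μ ⟨j + 1 + d, by omega⟩ := by
        apply hμmono; exact Fin.mk_le_mk.mpr (by omega)
      have hμ2 : μ ⟨j + 1, h1⟩ ≤ μ ⟨j + 1 + d, by omega⟩ := by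
        apply hμmono; exact Fin.mk_le_mk.mpr (by omega)
      have hε1 : ε ⟨j + 1, h1⟩ ≤ ε ⟨j, by omega⟩ := by
        apply hεanti; exact Fin.mk_le_mk.mpr (by omega)
      have hε2 : ε ⟨j + 1 + d, by omega⟩ ≤ ε ⟨j + 1, h1⟩ := by
        apply hεanti; exact Fin.mk_le_mk.mpr (by omega)
      have heq : (⟨j + (d + 1), h⟩ : Fin N) = ⟨j + 1 + d, by omega⟩ := by
        apply Fin.ext; simp; omega
      rw [heq, hrj]
      nlinarith
  intro i j hij
  rcases lt_or_gt_of_ne hij with hlt | hgt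
  · -- i < j : use aux1 at base i with d = j - i
    have h := aux1 (j.1 - i.1) i.1 (by omega)
    have heq : (⟨i.1 + (j.1 - i.1), by omega⟩ : Fin N) = j := by
      apply Fin.ext; simp; omega
    have heqi : (⟨i.1, by omega⟩ : Fin N) = i := Fin.ext rfl
    rw [heq, heqi] at h
    linarith
  · -- j < i : use aux2 at base j with d = i - j
    have h := aux2 (i.1 - j.1) j.1 (by omega)
    have heq : (⟨j.1 + (i.1 - j.1), by omega⟩ : Fin N) = i := by
      apply Fin.ext; simp; omega
    have heqj : (⟨j.1, by omega⟩ : Fin N) = j := Fin.ext rfl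
    rw [heq, heqj] at h
    linarith
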